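/- arXiv:2403.18574 — 2 statements merged into one kernel-verified Lean document; each statement's English description precedes it below -/
import Mathlib

section
/- The 2-measure of a finitely supported sequence f equals the maximum size of a subset of the support S(f) that contains no two consecutive integers, and this maximum equals the common cardinality of L(f) and R(f). -/
open scoped Classical

noncomputable section

/-- `f` is a frequency sequence: `f 0 = 0` and finite support. -/
def IsFreq (f : ℕ → ℕ) : Prop := f 0 = 0 ∧ (Function.support f).Finite

/-- size `|f| = ∑ i·f i`. -/
def fsize (f : ℕ → ℕ) : ℕ := ∑ᶠ n, n * f n

/-- length `ℓ(f) = ∑ f i`. -/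
def flen (f : ℕ → ℕ) : ℕ := ∑ᶠ n, f n

/-- the support `S(f)`. -/
def suppF (f : ℕ → ℕ) : Set ℕ := {i | 1 ≤ i ∧ f i ≠ 0}

/-- `[i,j]` is a spread of `f`: a maximal interval contained in the support. -/
def IsSpread (f : ℕ → ℕ) (i j : ℕ) : Prop :=
  1 ≤ i ∧ i ≤ j ∧ (∀ k, i ≤ k → k ≤ j → f k ≠ 0) ∧ (i = 1 ∨ f (i - 1) = 0) ∧ f (j + 1) = 0

/-- `L(f)`: every other element of each spread, starting from the left end. -/
def Lset (f : ℕ → ℕ) : Set ℕ :=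
  {q | ∃ i j, IsSpread f i j ∧ i ≤ q ∧ q ≤ j ∧ (q - i) % 2 = 0}

/-- `R(f)`: every other element of each spread, starting from the right end. -/
def Rset (f : ℕ → ℕ) : Set ℕ :=
  {q | ∃ i j, IsSpread f i j ∧ i ≤ q ∧ q ≤ j ∧ (j - q) % 2 = 0}

/-- the 2-measure, as the cardinality of `R(f)`. -/
def mu2 (f : ℕ → ℕ) : ℕ := (Rset f).ncard

/-- The Burge demotion operator `∂`. -/
def dB (f : ℕ → ℕ) : ℕ → ℕ := fun n =>
  if n = 0 then 0
  else f n - (if n ∈ Rset f then 1 else 0) + (if n + 1 ∈ Rset f then 1 else 0)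

/-- The promotion operator `α`. -/
def aB (f : ℕ → ℕ) : ℕ → ℕ := fun n =>
  if n = 0 then 0
  else f n - (if n ∈ Lset f then 1 else 0) + (if n - 1 ∈ Lset f then 1 else 0)

/-- the shift `(f₂, f₃, …)`; on partitions this is `P ↦ P - 1`. -/
def tailF (f : ℕ → ℕ) : ℕ → ℕ := fun n => if n = 0 then 0 else f (n + 1)

/-- The operator `β`: `β(f) = (f₁ + 1, α(f₂, f₃, …))`. -/
def bB (f : ℕ → ℕ) : ℕ → ℕ := fun n =>
  if n = 0 then 0 else if n = 1 then f 1 + 1 else aB (tailF f) (n - 1)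

/-- the zero sequence (empty partition). -/
def zeroF : ℕ → ℕ := fun _ => 0

/-- `k` minimal with `∂^[k] f = 0`. -/
def chainK (f : ℕ → ℕ) : ℕ :=
  if h : ∃ m, dB^[m] f = zeroF then Nat.find h else 0

/-- The Burge code of `f`, as a list of letters; `false` = `a`, `true` = `b`.
The `i`-th letter (0-indexed `i`) records whether `∂^[i] f ∈ B`, i.e. `1 ∈ R(∂^[i] f)`. -/
def burgeCode (f : ℕ → ℕ) : List Bool :=
  (List.range (chainK f + 1)).map fun i => if 1 ∈ Rset (dB^[i] f) then true else false

/-- descent set of a word: 1-indexed positions `i` with `ωᵢ = b`, `ω_{i+1} = a`. -/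
def descSet (w : List Bool) : Set ℕ :=
  {i | 1 ≤ i ∧ w[i - 1]? = some true ∧ w[i]? = some false}

/-- the descent set of (the Burge code of) a partition. -/
def DesSet (f : ℕ → ℕ) : Set ℕ := descSet (burgeCode f)

/-- `Des(P)` regarded as a partition, via its frequency sequence. -/
def desFreq (f : ℕ → ℕ) : ℕ → ℕ := fun i => if i ∈ DesSet f then 1 else 0

/-- the 2-measure as the maximal size of a subset of the support without
consecutive pairs. -/
def twoMeasure (f : ℕ → ℕ) : ℕ :=
  sSup {n | ∃ T : Finset ℕ, (↑T : Set ℕ) ⊆ suppF f ∧ (∀ x ∈ T, x + 1 ∉ T) ∧ T.card = n}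

/-- evaluation at `i`: `ν_i(f) = i f_i + (i+1) f_{i+1} + 2 ∑_{j>i+1} f_j`, with `ν₀ = ν₁`. -/
def nuI (f : ℕ → ℕ) (i : ℕ) : ℕ :=
  (max i 1) * f (max i 1) + (max i 1 + 1) * f (max i 1 + 1)
    + 2 * ∑ᶠ j ∈ {j : ℕ | max i 1 + 1 < j}, f j

/-- annihilation at `i`: `ρ_i(f) = (f₁, …, f_{i-1}, f_{i+2}, f_{i+3}, …)`, with `ρ₀ = ρ₁`. -/
def rhoI (f : ℕ → ℕ) (i : ℕ) : ℕ → ℕ := fun n =>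
  if n = 0 then 0 else if n < max i 1 then f n else f (n + 2)

/-- `i ≥ 1` is right admissible in `f`. -/
def RightAdm (f : ℕ → ℕ) (i : ℕ) : Prop :=
  1 ≤ i ∧ 0 < f i ∧ (0 < f (i + 1) ∨ (f (i - 1) = 0 ∧ f (i + 1) = 0))

/-- `i ≥ 0` is left admissible in `f`. -/
def LeftAdm (f : ℕ → ℕ) (i : ℕ) : Prop :=
  0 < f (i + 1) ∧ (0 < f i ∨ (f i = 0 ∧ f (i + 2) = 0))

/-- `i` is a maximal index for `f`: `ν_i(f)` is nonzero and maximal. -/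
def MaxIdx (f : ℕ → ℕ) (i : ℕ) : Prop :=
  nuI f i ≠ 0 ∧ ∀ j, nuI f j ≤ nuI f i

end

/-!
Inside each spread `[i, j]`, `R(f)` keeps the points `q` with `j - q` even, so it is a subset of
`S(f)` without two consecutive integers, and every `t ∈ S(f)` has `t ∈ R(f)` or `t + 1 ∈ R(f)`.
Hence any `T ⊆ S(f)` without consecutive integers injects into `R(f)` by `t ↦ t` or `t ↦ t + 1`:
two points of `T` can only collide if they are consecutive. Reflecting every spread through its
midpoint, `q ↦ i + j - q`, exchanges `L(f)` and `R(f)`.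
-/

open Function

section Spreads

variable {f : ℕ → ℕ}

lemma IsSpread.eq_of_mem {i j i' j' q : ℕ} (h : IsSpread f i j) (h' : IsSpread f i' j')
    (hiq : i ≤ q) (hqj : q ≤ j) (hiq' : i' ≤ q) (hqj' : q ≤ j') : i = i' ∧ j = j' := by
  obtain ⟨hi, -, hsupp, hleft, hright⟩ := h
  obtain ⟨hi', -, hsupp', hleft', hright'⟩ := h'
  refine ⟨?_, ?_⟩
  · by_contra hne
    rcases Nat.lt_or_gt_of_ne hne with hlt | hlt
    · exact hleft'.elim (by omega) (hsupp (i' - 1) (by omega) (by omega))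
    · exact hleft.elim (by omega) (hsupp' (i - 1) (by omega) (by omega))
  · by_contra hne
    rcases Nat.lt_or_gt_of_ne hne with hlt | hlt
    · exact hsupp' (j + 1) (by omega) (by omega) hright
    · exact hsupp (j' + 1) (by omega) (by omega) hright'

lemma exists_isSpread (hf : BddAbove (support f)) {q : ℕ} (hq : q ∈ suppF f) :
    ∃ i j, IsSpread f i j ∧ i ≤ q ∧ q ≤ j := by
  obtain ⟨hq1, hfq⟩ := hq
  obtain ⟨N, hN⟩ := hf
  have hright : ∃ j, q ≤ j ∧ f (j + 1) = 0 := by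
    refine ⟨max q N, le_max_left q N, ?_⟩
    by_contra h
    have := hN (mem_support.2 h)
    omega
  have hleft : ∃ i, 1 ≤ i ∧ i ≤ q ∧ ∀ k, i ≤ k → k ≤ q → f k ≠ 0 :=
    ⟨q, hq1, le_rfl, fun k h1 h2 => by rwa [le_antisymm h2 h1]⟩
  obtain ⟨hi1, hiq, hsupp_left⟩ := Nat.find_spec hleft
  obtain ⟨hqj, hj⟩ := Nat.find_spec hright
  refine ⟨Nat.find hleft, Nat.find hright, ⟨hi1, by omega, ?_, ?_, hj⟩, hiq, hqj⟩
  · intro k hik hkj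
    rcases le_or_gt k q with hkq | hqk
    · exact hsupp_left k hik hkq
    · have := Nat.find_min hright (show k - 1 < Nat.find hright by omega)
      rw [show k - 1 + 1 = k by omega] at this
      exact fun hk => this ⟨by omega, hk⟩
  · by_contra h
    push Not at h
    refine Nat.find_min hleft (show Nat.find hleft - 1 < Nat.find hleft by omega)
      ⟨by omega, by omega, fun k hk hkq => ?_⟩
    rcases Nat.eq_or_lt_of_le hk with rfl | hlt
    · exact h.2
    · exact hsupp_left k (by omega) hkq

lemma Rset_subset_suppF : Rset f ⊆ suppF f := by
  rintro q ⟨i, j, hsp, hiq, hqj, -⟩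
  exact ⟨hsp.1.trans hiq, hsp.2.2.1 q hiq hqj⟩

lemma add_one_notMem_Rset {q : ℕ} (hq : q ∈ Rset f) : q + 1 ∉ Rset f := by
  rintro ⟨i', j', hsp', hiq', hqj', hpar'⟩
  obtain ⟨i, j, hsp, hiq, hqj, hpar⟩ := hq
  have hfq : f q ≠ 0 := hsp.2.2.1 q hiq hqj
  have hi'q : i' ≤ q := by
    by_contra hlt
    rcases hsp'.2.2.2.1 with h | h
    · have := hsp.1
      omega
    · exact hfq (by rwa [show i' - 1 = q by omega] at h)
  obtain ⟨-, rfl⟩ := hsp.eq_of_mem hsp' hiq hqj hi'q (by omega)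
  omega

lemma mem_Rset_or_add_one_mem_Rset (hf : BddAbove (support f)) {q : ℕ} (hq : q ∈ suppF f) :
    q ∈ Rset f ∨ q + 1 ∈ Rset f := by
  obtain ⟨i, j, hsp, hiq, hqj⟩ := exists_isSpread hf hq
  rcases Nat.mod_two_eq_zero_or_one (j - q) with heven | hodd
  · exact Or.inl ⟨i, j, hsp, hiq, hqj, heven⟩
  · exact Or.inr ⟨i, j, hsp, by omega, by omega, by omega⟩

end Spreads

lemma ncard_le_ncard_of_mem_or_add_one_mem {S T : Set ℕ} (hS : S.Finite)
    (hT : ∀ x ∈ T, x + 1 ∉ T) (hcover : ∀ t ∈ T, t ∈ S ∨ t + 1 ∈ S) : T.ncard ≤ S.ncard := by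
  refine Set.ncard_le_ncard_of_injOn (fun t => if t ∈ S then t else t + 1) ?_ ?_ hS
  · intro t ht
    split_ifs with h
    · exact h
    · exact (hcover t ht).resolve_left h
  · intro a ha b hb hab
    by_cases hA : a ∈ S <;> by_cases hB : b ∈ S <;> simp only [hA, hB, if_true, if_false] at hab
    · exact hab
    · exact absurd (hab ▸ ha) (hT b hb)
    · exact absurd (hab ▸ hb) (hT a ha)
    · omega

section Reflection

variable {f : ℕ → ℕ}

noncomputable def spreadReflect (f : ℕ → ℕ) (q : ℕ) : ℕ :=
  if h : ∃ i j, IsSpread f i j ∧ i ≤ q ∧ q ≤ j then h.choose + h.choose_spec.choose - q else q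

lemma spreadReflect_eq {i j q : ℕ} (hsp : IsSpread f i j) (hiq : i ≤ q) (hqj : q ≤ j) :
    spreadReflect f q = i + j - q := by
  have h : ∃ i j, IsSpread f i j ∧ i ≤ q ∧ q ≤ j := ⟨i, j, hsp, hiq, hqj⟩
  obtain ⟨hsp', hiq', hqj'⟩ := h.choose_spec.choose_spec
  obtain ⟨hi, hj⟩ := hsp'.eq_of_mem hsp hiq' hqj' hiq hqj
  rw [spreadReflect, dif_pos h]
  omega

lemma spreadReflect_spreadReflect {i j q : ℕ} (hsp : IsSpread f i j) (hiq : i ≤ q)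
    (hqj : q ≤ j) : spreadReflect f (spreadReflect f q) = q := by
  rw [spreadReflect_eq hsp hiq hqj, spreadReflect_eq hsp (by omega) (by omega)]
  omega

lemma bijOn_spreadReflect_Lset_Rset : Set.BijOn (spreadReflect f) (Lset f) (Rset f) := by
  refine Set.InvOn.bijOn (f' := spreadReflect f) ⟨?_, ?_⟩ ?_ ?_
  · rintro q ⟨i, j, hsp, hiq, hqj, -⟩
    exact spreadReflect_spreadReflect hsp hiq hqj
  · rintro q ⟨i, j, hsp, hiq, hqj, -⟩
    exact spreadReflect_spreadReflect hsp hiq hqj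
  · rintro q ⟨i, j, hsp, hiq, hqj, hpar⟩
    rw [spreadReflect_eq hsp hiq hqj]
    exact ⟨i, j, hsp, by omega, by omega, by omega⟩
  · rintro q ⟨i, j, hsp, hiq, hqj, hpar⟩
    rw [spreadReflect_eq hsp hiq hqj]
    exact ⟨i, j, hsp, by omega, by omega, by omega⟩

lemma ncard_Lset_eq_ncard_Rset : (Lset f).ncard = (Rset f).ncard :=
  bijOn_spreadReflect_Lset_Rset.ncard_eq

end Reflection

lemma isGreatest_ncard_Rset {f : ℕ → ℕ} (hf : (support f).Finite) :
    IsGreatest {n | ∃ T : Finset ℕ, (↑T : Set ℕ) ⊆ suppF f ∧ (∀ x ∈ T, x + 1 ∉ T) ∧ T.card = n}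
      (Rset f).ncard := by
  have hR : (Rset f).Finite := (hf.subset fun _ hx => hx.2).subset Rset_subset_suppF
  refine ⟨⟨hR.toFinset, ?_, ?_, (Set.ncard_eq_toFinset_card _ hR).symm⟩, ?_⟩
  · simpa using Rset_subset_suppF
  · intro x hx
    simpa using add_one_notMem_Rset (hR.mem_toFinset.1 hx)
  · rintro n ⟨T, hTS, hT, rfl⟩
    rw [← Set.ncard_coe_finset]
    exact ncard_le_ncard_of_mem_or_add_one_mem hR hT
      fun t ht => mem_Rset_or_add_one_mem_Rset hf.bddAbove (hTS ht)

/-- the 2-measure of `f` equals the maximum size of a subset of the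
support with no two consecutive integers, and this maximum equals the common
cardinality of `L(f)` and `R(f)`. -/
theorem stmt1 (f : ℕ → ℕ) (hf : IsFreq f) :
    IsGreatest {n | ∃ T : Finset ℕ, (↑T : Set ℕ) ⊆ suppF f ∧ (∀ x ∈ T, x + 1 ∉ T) ∧ T.card = n}
      (twoMeasure f) ∧
    twoMeasure f = (Lset f).ncard ∧ twoMeasure f = (Rset f).ncard := by
  have hR := isGreatest_ncard_Rset hf.2
  have hmu : twoMeasure f = (Rset f).ncard := hR.csSup_eq
  exact ⟨hmu ▸ hR, hmu.trans ncard_Lset_eq_ncard_Rset.symm, hmu⟩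
end

section
/- The Burge encoding f ↦ Ω(f) is a bijection between F and the set W = (a*b)*a of finite words on the alphabet {a, b} matching the regular expression (a*b)*a. -/
open scoped Classical

/-- a word in `W = (a*b)*a`: it ends with `a`, and the letter before that (if
any) is `b`. -/
def IsWword (w : List Bool) : Prop :=
  ∃ w', w = w' ++ [false] ∧ (w' = [] ∨ w'.getLast? = some true)


section BurgeLemmas

variable {f : ℕ → ℕ}

lemma Rset_nonzero {q : ℕ} (h : q ∈ Rset f) : 1 ≤ q ∧ f q ≠ 0 := by
  obtain ⟨i, j, ⟨hi1, hij, hnz, _, _⟩, hiq, hqj, _⟩ := h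
  exact ⟨le_trans hi1 hiq, hnz q hiq hqj⟩

lemma Lset_nonzero {q : ℕ} (h : q ∈ Lset f) : 1 ≤ q ∧ f q ≠ 0 := by
  obtain ⟨i, j, ⟨hi1, hij, hnz, _, _⟩, hiq, hqj, _⟩ := h
  exact ⟨le_trans hi1 hiq, hnz q hiq hqj⟩

lemma spread_unique {i j i' j' q : ℕ} (h : IsSpread f i j) (h' : IsSpread f i' j')
    (h1 : i ≤ q) (h2 : q ≤ j) (h3 : i' ≤ q) (h4 : q ≤ j') : i = i' ∧ j = j' := by
  obtain ⟨hi1, hij, hnz, hl, hr⟩ := h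
  obtain ⟨hi1', hij', hnz', hl', hr'⟩ := h'
  constructor
  · rcases lt_trichotomy i i' with hlt | he | hgt
    · exfalso
      rcases hl' with h1' | h0'
      · omega
      · exact hnz (i' - 1) (by omega) (by omega) h0'
    · exact he
    · exfalso
      rcases hl with h1' | h0'
      · omega
      · exact hnz' (i - 1) (by omega) (by omega) h0'
  · rcases lt_trichotomy j j' with hlt | he | hgt
    · exact absurd (hnz' (j + 1) (by omega) (by omega)) (by simp [hr])
    · exact he
    · exact absurd (hnz (j' + 1) (by omega) (by omega)) (by simp [hr'])

/-- existence of the spread containing a point of the support -/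
lemma exists_spread (h0 : f 0 = 0) (hfin : (Function.support f).Finite) {q : ℕ}
    (hq1 : 1 ≤ q) (hq : f q ≠ 0) : ∃ i j, IsSpread f i j ∧ i ≤ q ∧ q ≤ j := by
  -- upper end
  obtain ⟨N, hN⟩ : ∃ N, ∀ m, N ≤ m → f m = 0 := by
    obtain ⟨N, hN⟩ := hfin.bddAbove
    exact ⟨N + 1, fun m hm => by
      by_contra hc
      exact absurd (hN (Function.mem_support.mpr hc)) (by omega)⟩
  have hexj : ∃ t, f (q + 1 + t) = 0 := ⟨N, hN _ (by omega)⟩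
  set t0 := Nat.find hexj with ht0
  have hjt : f (q + 1 + t0) = 0 := Nat.find_spec hexj
  have hjlt : ∀ t, t < t0 → f (q + 1 + t) ≠ 0 := fun t ht => Nat.find_min hexj ht
  -- lower end
  have hexi : ∃ s, s ≤ q ∧ ∀ k, s ≤ k → k ≤ q → f k ≠ 0 := by
    exact ⟨q, le_refl q, fun k hk1 hk2 => by have : k = q := by omega
                                             rw [this]; exact hq⟩
  set i := Nat.find hexi with hi
  obtain ⟨hiq, hinz⟩ := Nat.find_spec hexi
  have hi1 : 1 ≤ i := by
    by_contra hc
    have : i = 0 := by omega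
    exact (hinz 0 (by omega) (by omega)) h0
  have hileft : f (i - 1) = 0 := by
    by_contra hc
    have hP : (i - 1) ≤ q ∧ ∀ k, (i - 1) ≤ k → k ≤ q → f k ≠ 0 := by
      refine ⟨by omega, fun k hk1 hk2 => ?_⟩
      rcases Nat.eq_or_lt_of_le hk1 with he | hlt
      · rw [← he]; exact hc
      · exact hinz k (by omega) hk2
    exact absurd hP (Nat.find_min hexi (by omega))
  refine ⟨i, q + t0, ⟨hi1, by omega, ?_, Or.inr hileft, ?_⟩, hiq, by omega⟩
  · intro k hk1 hk2
    rcases le_or_gt k q with hle | hlt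
    · exact hinz k hk1 hle
    · have : k = q + 1 + (k - q - 1) := by omega
      rw [this]
      exact hjlt _ (by omega)
  · have : q + t0 + 1 = q + 1 + t0 := by omega
    rw [this]; exact hjt

/-- recursive characterization of `R`. -/
lemma mem_R_iff (h0 : f 0 = 0) (hfin : (Function.support f).Finite) (q : ℕ) :
    q ∈ Rset f ↔ 1 ≤ q ∧ f q ≠ 0 ∧ q + 1 ∉ Rset f := by
  constructor
  · intro h
    obtain ⟨hq1, hqnz⟩ := Rset_nonzero h
    refine ⟨hq1, hqnz, ?_⟩
    obtain ⟨i, j, hs, hiq, hqj, hpar⟩ := h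
    rintro ⟨i', j', hs', hiq', hqj', hpar'⟩
    rcases Nat.eq_or_lt_of_le hqj with he | hlt
    · exact (hs'.2.2.1 (q + 1) hiq' hqj') (by rw [he]; exact hs.2.2.2.2)
    · obtain ⟨hii, hjj⟩ := spread_unique hs hs' (q := q + 1) (by omega) (by omega) hiq' hqj'
      omega
  · rintro ⟨hq1, hqnz, hnot⟩
    obtain ⟨i, j, hs, hiq, hqj⟩ := exists_spread h0 hfin hq1 hqnz
    by_cases hpar : (j - q) % 2 = 0
    · exact ⟨i, j, hs, hiq, hqj, hpar⟩
    · exfalso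
      exact hnot ⟨i, j, hs, by omega, by omega, by omega⟩

/-- recursive characterization of `L`. -/
lemma mem_L_iff (h0 : f 0 = 0) (hfin : (Function.support f).Finite) (q : ℕ) :
    q ∈ Lset f ↔ 1 ≤ q ∧ f q ≠ 0 ∧ q - 1 ∉ Lset f := by
  constructor
  · intro h
    obtain ⟨hq1, hqnz⟩ := Lset_nonzero h
    refine ⟨hq1, hqnz, ?_⟩
    obtain ⟨i, j, hs, hiq, hqj, hpar⟩ := h
    intro hmem
    obtain ⟨i', j', hs', hiq', hqj', hpar'⟩ := hmem
    have hqnz' : f (q - 1) ≠ 0 := hs'.2.2.1 (q - 1) hiq' hqj'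
    rcases Nat.eq_or_lt_of_le hiq with he | hlt
    · rcases hs.2.2.2.1 with h1 | hz
      · exact hqnz' (by rw [← he, h1]; exact h0)
      · exact hqnz' (by rw [← he]; exact hz)
    · obtain ⟨hii, hjj⟩ := spread_unique hs hs' (q := q - 1) (by omega) (by omega) hiq' hqj'
      omega
  · rintro ⟨hq1, hqnz, hnot⟩
    obtain ⟨i, j, hs, hiq, hqj⟩ := exists_spread h0 hfin hq1 hqnz
    by_cases hpar : (q - i) % 2 = 0
    · exact ⟨i, j, hs, hiq, hqj, hpar⟩
    · exfalso
      exact hnot ⟨i, j, hs, by omega, by omega, by omega⟩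


lemma supp_bound (hfin : (Function.support f).Finite) : ∃ N, ∀ m, N ≤ m → f m = 0 := by
  obtain ⟨N, hN⟩ := hfin.bddAbove
  exact ⟨N + 1, fun m hm => by
    by_contra hc
    exact absurd (hN (Function.mem_support.mpr hc)) (by omega)⟩

lemma fin_of_bound {N : ℕ} (hN : ∀ m, N ≤ m → f m = 0) :
    (Function.support f).Finite := by
  apply Set.Finite.subset (Set.finite_Iio N)
  intro m hm
  simp only [Set.mem_Iio]
  by_contra hc
  exact hm (hN m (by omega))

lemma dB_zero_at : dB f 0 = 0 := by simp [dB]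

lemma aB_zero_at : aB f 0 = 0 := by simp [aB]

lemma tailF_zero_at : tailF f 0 = 0 := by simp [tailF]

lemma bB_zero_at : bB f 0 = 0 := by simp [bB]

lemma dB_bound {N : ℕ} (hN : ∀ m, N ≤ m → f m = 0) : ∀ m, N ≤ m → dB f m = 0 := by
  intro m hm
  have h1 : m ∉ Rset f := fun h => (Rset_nonzero h).2 (hN m hm)
  have h2 : m + 1 ∉ Rset f := fun h => (Rset_nonzero h).2 (hN _ (by omega))
  simp [dB, h1, h2, hN m hm]

lemma aB_bound {N : ℕ} (hN : ∀ m, N ≤ m → f m = 0) : ∀ m, N + 1 ≤ m → aB f m = 0 := by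
  intro m hm
  have h1 : m ∉ Lset f := fun h => (Lset_nonzero h).2 (hN m (by omega))
  have h2 : m - 1 ∉ Lset f := fun h => (Lset_nonzero h).2 (hN _ (by omega))
  simp [aB, h1, h2, hN m (by omega), show m ≠ 0 by omega]

lemma tailF_bound {N : ℕ} (hN : ∀ m, N ≤ m → f m = 0) : ∀ m, N ≤ m → tailF f m = 0 := by
  intro m hm
  rcases Nat.eq_zero_or_pos m with rfl | h
  · exact tailF_zero_at
  · simp [tailF, show m ≠ 0 by omega, hN (m + 1) (by omega)]

lemma bB_bound {N : ℕ} (hN : ∀ m, N ≤ m → f m = 0) : ∀ m, N + 3 ≤ m → bB f m = 0 := by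
  intro m hm
  have := aB_bound (tailF_bound hN) (m - 1) (by omega)
  simp [bB, show m ≠ 0 by omega, show m ≠ 1 by omega, this]

/-- a downward-induction principle for equivalences. -/
lemma downward_iff {P Q : ℕ → Prop} (N : ℕ) (base : ∀ m, N ≤ m → ¬P m ∧ ¬Q m)
    (step : ∀ m, (P (m + 1) ↔ Q (m + 1)) → (P m ↔ Q m)) : ∀ m, P m ↔ Q m := by
  have key : ∀ t m, N ≤ m + t → (P m ↔ Q m) := by
    intro t
    induction t with
    | zero =>
      intro m hm
      have := base m (by omega)
      exact ⟨fun h => absurd h this.1, fun h => absurd h this.2⟩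
    | succ t ih =>
      intro m hm
      rcases le_or_gt N m with h | h
      · have := base m h
        exact ⟨fun h' => absurd h' this.1, fun h' => absurd h' this.2⟩
      · exact step m (ih (m + 1) (by omega))
  intro m
  exact key N m (by omega)

/-- shifting: `R` commutes with the tail shift. -/
lemma mem_R_tail (h0 : f 0 = 0) (hfin : (Function.support f).Finite) :
    ∀ m, 1 ≤ m → (m + 1 ∈ Rset f ↔ m ∈ Rset (tailF f)) := by
  obtain ⟨N, hN⟩ := supp_bound hfin
  have hfin' : (Function.support (tailF f)).Finite := fin_of_bound (tailF_bound hN)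
  have main : ∀ m, (m + 1 ∈ Rset f ∧ 1 ≤ m) ↔ m ∈ Rset (tailF f) := by
    refine downward_iff N (fun m hm => ⟨?_, ?_⟩) (fun m ih => ?_)
    · rintro ⟨h, -⟩
      exact (Rset_nonzero h).2 (hN _ (by omega))
    · intro h
      exact (Rset_nonzero h).2 (tailF_bound hN m hm)
    · rcases Nat.eq_zero_or_pos m with rfl | hm
      · constructor
        · rintro ⟨-, h⟩; omega
        · intro h; exact absurd (Rset_nonzero h).1 (by omega)
      · rw [mem_R_iff h0 hfin (m + 1), mem_R_iff tailF_zero_at hfin' m]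
        have ht : tailF f m = f (m + 1) := by simp [tailF, show m ≠ 0 by omega]
        constructor
        · rintro ⟨⟨-, h2, h3⟩, -⟩
          exact ⟨hm, by rw [ht]; exact h2, fun hc => h3 (ih.mpr hc).1⟩
        · rintro ⟨h1, h2, h3⟩
          exact ⟨⟨by omega, by rw [← ht]; exact h2, fun hc => h3 (ih.mp ⟨hc, by omega⟩)⟩, hm⟩
  intro m hm
  rw [← main m]
  exact ⟨fun h => ⟨h, hm⟩, fun h => h.1⟩

/-- the key step for the A-case. -/
lemma key_A (h0 : f 0 = 0) (hfin : (Function.support f).Finite) {n : ℕ} (hn1 : 1 ≤ n) :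
    (dB f n ≠ 0 ∧ n ∉ Rset f) ↔ (f (n + 1) ≠ 0 ∧ n + 2 ∉ Rset f) := by
  have hn0 : n ≠ 0 := by omega
  have hdb : dB f n =
      f n - (if n ∈ Rset f then 1 else 0) + (if n + 1 ∈ Rset f then 1 else 0) := by
    simp [dB, hn0]
  by_cases hn : n ∈ Rset f
  · have h2 := (mem_R_iff h0 hfin n).mp hn
    constructor
    · rintro ⟨-, hc⟩
      exact absurd hn hc
    · rintro ⟨ha, hb⟩
      exact absurd ((mem_R_iff h0 hfin (n + 1)).mpr ⟨by omega, ha, hb⟩) h2.2.2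
  · constructor
    · rintro ⟨hd, -⟩
      have hm : n + 1 ∈ Rset f := by
        by_cases hfn : f n = 0
        · by_contra hc
          rw [hdb, if_neg hn, if_neg hc, hfn] at hd
          simp at hd
        · by_contra hc
          exact hn ((mem_R_iff h0 hfin n).mpr ⟨hn1, hfn, hc⟩)
      have := (mem_R_iff h0 hfin (n + 1)).mp hm
      exact ⟨this.2.1, this.2.2⟩
    · rintro ⟨ha, hb⟩
      have hm : n + 1 ∈ Rset f := (mem_R_iff h0 hfin (n + 1)).mpr ⟨by omega, ha, hb⟩
      refine ⟨?_, hn⟩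
      rw [hdb, if_neg hn, if_pos hm]
      omega

/-- `L(∂f) = R(f) - 1` when `1 ∉ R(f)`. -/
lemma mem_L_dB (h0 : f 0 = 0) (hfin : (Function.support f).Finite) (h1 : 1 ∉ Rset f) :
    ∀ q, q ∈ Lset (dB f) ↔ q + 1 ∈ Rset f := by
  obtain ⟨N, hN⟩ := supp_bound hfin
  have hfin' : (Function.support (dB f)).Finite := fin_of_bound (dB_bound hN)
  intro q
  induction q with
  | zero =>
    constructor
    · intro h; exact absurd (Lset_nonzero h).1 (by omega)
    · intro h; exact absurd h h1
  | succ q ih =>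
    rw [mem_L_iff dB_zero_at hfin' (q + 1), Nat.add_sub_cancel, ih,
      mem_R_iff h0 hfin (q + 1 + 1)]
    have hk := key_A h0 hfin (f := f) (n := q + 1) (by omega)
    constructor
    · rintro ⟨-, h2, h3⟩
      have := hk.mp ⟨h2, h3⟩
      exact ⟨by omega, this.1, this.2⟩
    · rintro ⟨-, h2, h3⟩
      have := hk.mpr ⟨h2, h3⟩
      exact ⟨by omega, this.1, this.2⟩


/-- A-case inverse: `α(∂f) = f` when `1 ∉ R(f)`. -/
lemma aB_dB (h0 : f 0 = 0) (hfin : (Function.support f).Finite) (h1 : 1 ∉ Rset f) :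
    aB (dB f) = f := by
  funext n
  rcases Nat.eq_zero_or_pos n with rfl | hn
  · rw [aB_zero_at, h0]
  · have hn0 : n ≠ 0 := by omega
    have e1 : (if n ∈ Lset (dB f) then 1 else 0) = (if n + 1 ∈ Rset f then 1 else 0) :=
      if_congr (mem_L_dB h0 hfin h1 n) rfl rfl
    have e2 : (if n - 1 ∈ Lset (dB f) then 1 else 0) = (if n ∈ Rset f then 1 else 0) := by
      have h := mem_L_dB h0 hfin h1 (n - 1)
      rw [show n - 1 + 1 = n by omega] at h
      exact if_congr h rfl rfl
    have ha : (if n ∈ Rset f then 1 else 0) ≤ f n := by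
      split_ifs with h
      · exact Nat.one_le_iff_ne_zero.mpr (Rset_nonzero h).2
      · exact Nat.zero_le _
    simp only [aB, dB, if_neg hn0]
    rw [e1, e2]
    omega

/-- `R(αf) = L(f) + 1`. -/
lemma mem_R_aB (h0 : f 0 = 0) (hfin : (Function.support f).Finite) :
    ∀ q, q + 1 ∈ Rset (aB f) ↔ q ∈ Lset f := by
  obtain ⟨N, hN⟩ := supp_bound hfin
  have hfin' : (Function.support (aB f)).Finite := fin_of_bound (aB_bound hN)
  refine downward_iff (N + 1) (fun m hm => ⟨?_, ?_⟩) (fun m ih => ?_)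
  · intro h
    exact (Rset_nonzero h).2 (aB_bound hN (m + 1) (by omega))
  · intro h
    exact (Lset_nonzero h).2 (hN m (by omega))
  · have haB : aB f (m + 1) = f (m + 1) - (if m + 1 ∈ Lset f then 1 else 0)
        + (if m ∈ Lset f then 1 else 0) := by
      simp [aB]
    rw [mem_R_iff aB_zero_at hfin' (m + 1)]
    constructor
    · rintro ⟨-, h2, h3⟩
      have hm1 : m + 1 ∉ Lset f := fun hc => h3 (ih.mpr hc)
      by_cases hfm : f (m + 1) = 0
      · by_contra hq
        rw [haB, if_neg hm1, hfm] at h2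
        simp [hq] at h2
      · by_contra hq
        exact hm1 ((mem_L_iff h0 hfin (m + 1)).mpr
          ⟨by omega, hfm, by rwa [Nat.add_sub_cancel]⟩)
    · intro hq
      have hm1 : m + 1 ∉ Lset f := fun hc =>
        ((mem_L_iff h0 hfin (m + 1)).mp hc).2.2 (by rw [Nat.add_sub_cancel]; exact hq)
      refine ⟨by omega, ?_, fun hc => hm1 (ih.mp hc)⟩
      rw [haB, if_neg hm1, if_pos hq]
      omega

lemma one_notin_R_aB (h0 : f 0 = 0) (hfin : (Function.support f).Finite) :
    1 ∉ Rset (aB f) := by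
  obtain ⟨N, hN⟩ := supp_bound hfin
  have hfin' : (Function.support (aB f)).Finite := fin_of_bound (aB_bound hN)
  intro h
  have h2 := (mem_R_iff aB_zero_at hfin' 1).mp h
  have h3 : 1 ∉ Lset f := fun hc => (h2.2.2 ((mem_R_aB h0 hfin 1).mpr hc))
  have h4 : 0 ∉ Lset f := fun hc => absurd (Lset_nonzero hc).1 (by omega)
  have h5 : aB f 1 = f 1 := by simp [aB, h3, h4]
  rw [h5] at h2
  exact h3 ((mem_L_iff h0 hfin 1).mpr ⟨le_refl 1, h2.2.1, h4⟩)

/-- A-case inverse, other direction: `∂(αf) = f`. -/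
lemma dB_aB (h0 : f 0 = 0) (hfin : (Function.support f).Finite) :
    dB (aB f) = f := by
  funext n
  rcases Nat.eq_zero_or_pos n with rfl | hn
  · rw [dB_zero_at, h0]
  · have hn0 : n ≠ 0 := by omega
    have e1 : (if n ∈ Rset (aB f) then 1 else 0) = (if n - 1 ∈ Lset f then 1 else 0) := by
      have h := mem_R_aB h0 hfin (n - 1)
      rw [show n - 1 + 1 = n by omega] at h
      exact if_congr h rfl rfl
    have e2 : (if n + 1 ∈ Rset (aB f) then 1 else 0) = (if n ∈ Lset f then 1 else 0) :=
      if_congr (mem_R_aB h0 hfin n) rfl rfl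
    have ha : (if n ∈ Lset f then 1 else 0) ≤ f n := by
      split_ifs with h
      · exact Nat.one_le_iff_ne_zero.mpr (Lset_nonzero h).2
      · exact Nat.zero_le _
    simp only [dB, aB, if_neg hn0]
    rw [e1, e2]
    omega

/-- the tail shift commutes with `∂`. -/
lemma tail_dB (h0 : f 0 = 0) (hfin : (Function.support f).Finite) :
    tailF (dB f) = dB (tailF f) := by
  funext n
  rcases Nat.eq_zero_or_pos n with rfl | hn
  · rw [tailF_zero_at, dB_zero_at]
  · have hn0 : n ≠ 0 := by omega
    have e1 : (if n ∈ Rset (tailF f) then 1 else 0) = (if n + 1 ∈ Rset f then 1 else 0) :=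
      if_congr (mem_R_tail h0 hfin n (by omega)).symm rfl rfl
    have e2 : (if n + 1 ∈ Rset (tailF f) then 1 else 0)
        = (if n + 2 ∈ Rset f then 1 else 0) :=
      if_congr (mem_R_tail h0 hfin (n + 1) (by omega)).symm rfl rfl
    have h1 : tailF (dB f) n = dB f (n + 1) := by simp [tailF, hn0]
    rw [h1]
    simp only [dB, tailF, if_neg hn0, show n + 1 ≠ 0 by omega]
    rw [e1, e2]
    simp

lemma tailF_fin (hfin : (Function.support f).Finite) :
    (Function.support (tailF f)).Finite := by
  obtain ⟨N, hN⟩ := supp_bound hfin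
  exact fin_of_bound (tailF_bound hN)

/-- B-case inverse: `β(∂f) = f` when `1 ∈ R(f)`. -/
lemma bB_dB (h0 : f 0 = 0) (hfin : (Function.support f).Finite) (h1 : 1 ∈ Rset f) :
    bB (dB f) = f := by
  have h2 : 2 ∉ Rset f := ((mem_R_iff h0 hfin 1).mp h1).2.2
  have hf1 : f 1 ≠ 0 := (Rset_nonzero h1).2
  have htail1 : 1 ∉ Rset (tailF f) := fun hc => h2 ((mem_R_tail h0 hfin 1 (le_refl 1)).mpr hc)
  funext n
  rcases Nat.eq_zero_or_pos n with rfl | hn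
  · rw [bB_zero_at, h0]
  · rcases Nat.lt_or_ge n 2 with hn2 | hn2
    · have hn1 : n = 1 := by omega
      subst hn1
      have : bB (dB f) 1 = dB f 1 + 1 := by simp [bB]
      rw [this]
      simp only [dB, if_neg (show (1:ℕ) ≠ 0 by omega), if_pos h1, if_neg h2]
      omega
    · have hb : bB (dB f) n = aB (tailF (dB f)) (n - 1) := by
        simp [bB, show n ≠ 0 by omega, show n ≠ 1 by omega]
      rw [hb, tail_dB h0 hfin,
        aB_dB tailF_zero_at (tailF_fin hfin) htail1]
      simp [tailF, show n - 1 ≠ 0 by omega, show n - 1 + 1 = n by omega]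

lemma tail_bB : tailF (bB f) = aB (tailF f) := by
  funext n
  rcases Nat.eq_zero_or_pos n with rfl | hn
  · rw [tailF_zero_at, aB_zero_at]
  · simp [tailF, bB, show n ≠ 0 by omega, show n + 1 ≠ 0 by omega,
      show n + 1 ≠ 1 by omega]

lemma bB_fin (hfin : (Function.support f).Finite) :
    (Function.support (bB f)).Finite := by
  obtain ⟨N, hN⟩ := supp_bound hfin
  exact fin_of_bound (bB_bound hN)

lemma one_mem_R_bB (h0 : f 0 = 0) (hfin : (Function.support f).Finite) :
    1 ∈ Rset (bB f) := by
  have h2 : 2 ∉ Rset (bB f) := by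
    intro hc
    have := (mem_R_tail bB_zero_at (bB_fin hfin) 1 (le_refl 1)).mp hc
    rw [tail_bB] at this
    exact one_notin_R_aB tailF_zero_at (tailF_fin hfin) this
  refine (mem_R_iff bB_zero_at (bB_fin hfin) 1).mpr ⟨le_refl 1, ?_, h2⟩
  simp [bB]

/-- B-case inverse, other direction: `∂(βf) = f`. -/
lemma dB_bB (h0 : f 0 = 0) (hfin : (Function.support f).Finite) :
    dB (bB f) = f := by
  have h1 : 1 ∈ Rset (bB f) := one_mem_R_bB h0 hfin
  have h2 : 2 ∉ Rset (bB f) := ((mem_R_iff bB_zero_at (bB_fin hfin) 1).mp h1).2.2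
  funext n
  rcases Nat.eq_zero_or_pos n with rfl | hn
  · rw [dB_zero_at, h0]
  · rcases Nat.lt_or_ge n 2 with hn2 | hn2
    · have hn1 : n = 1 := by omega
      subst hn1
      simp only [dB, if_neg (show (1:ℕ) ≠ 0 by omega), if_pos h1, if_neg h2]
      simp [bB]
    · have hkey : tailF (dB (bB f)) = tailF f := by
        rw [tail_dB bB_zero_at (bB_fin hfin), tail_bB,
          dB_aB tailF_zero_at (tailF_fin hfin)]
      have e1 : dB (bB f) n = tailF (dB (bB f)) (n - 1) := by
        simp [tailF, show n - 1 ≠ 0 by omega, show n - 1 + 1 = n by omega]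
      rw [e1, hkey]
      simp [tailF, show n - 1 ≠ 0 by omega, show n - 1 + 1 = n by omega]


lemma Rset_zeroF : ∀ q, q ∉ Rset zeroF := fun q h => (Rset_nonzero h).2 rfl

lemma Lset_zeroF : ∀ q, q ∉ Lset zeroF := fun q h => (Lset_nonzero h).2 rfl

lemma dB_zeroF : dB zeroF = zeroF := by
  funext n
  simp [dB, Rset_zeroF n, Rset_zeroF (n + 1), zeroF]

lemma zeroF_fin : (Function.support zeroF).Finite := by
  simp [zeroF, Function.support]

lemma exists_R (h0 : f 0 = 0) (hfin : (Function.support f).Finite) (hne : f ≠ zeroF) :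
    ∃ q, q ∈ Rset f := by
  by_contra hc
  push_neg at hc
  apply hne
  funext n
  rcases Nat.eq_zero_or_pos n with rfl | hn
  · exact h0
  · by_contra hfn
    exact hc n ((mem_R_iff h0 hfin n).mpr ⟨hn, hfn, hc (n + 1)⟩)

lemma size_lt (h0 : f 0 = 0) (hfin : (Function.support f).Finite) {N : ℕ}
    (hN : ∀ m, N ≤ m → f m = 0) (hne : f ≠ zeroF) :
    ∑ n ∈ Finset.range N, n * dB f n < ∑ n ∈ Finset.range N, n * f n := by
  obtain ⟨q, hq⟩ := exists_R h0 hfin hne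
  have hq1 : 1 ≤ q := (Rset_nonzero hq).1
  have hqN : q < N := by
    by_contra hc
    exact (Rset_nonzero hq).2 (hN q (by omega))
  have hrN : N ∉ Rset f := fun h => (Rset_nonzero h).2 (hN N (le_refl N))
  have hr0 : (0 : ℕ) ∉ Rset f := fun h => absurd (Rset_nonzero h).1 (by omega)
  have hcast : ∀ n : ℕ, 1 ≤ n → (dB f n : ℤ)
      = (f n : ℤ) - (if n ∈ Rset f then 1 else 0) + (if n + 1 ∈ Rset f then 1 else 0) := by
    intro n hn
    have hle : (if n ∈ Rset f then 1 else 0) ≤ f n := by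
      split_ifs with h
      · exact Nat.one_le_iff_ne_zero.mpr (Rset_nonzero h).2
      · exact Nat.zero_le _
    have hdb : dB f n
        = f n - (if n ∈ Rset f then 1 else 0) + (if n + 1 ∈ Rset f then 1 else 0) := by
      simp [dB, show n ≠ 0 by omega]
    rw [hdb]
    split_ifs at hle ⊢ <;> omega
  have main : ∀ M : ℕ, ∑ n ∈ Finset.range M, (n : ℤ) * dB f n
      = ∑ n ∈ Finset.range M, (n : ℤ) * f n
        - (∑ n ∈ Finset.range M, (if n ∈ Rset f then (1 : ℤ) else 0))
        + ((M : ℤ) - 1) * (if M ∈ Rset f then 1 else 0) := by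
    intro M
    induction M with
    | zero => simp [hr0]
    | succ M ihM =>
      rw [Finset.sum_range_succ, Finset.sum_range_succ, Finset.sum_range_succ, ihM]
      have hd : (M : ℤ) * dB f M
          = (M : ℤ) * ((f M : ℤ) - (if M ∈ Rset f then 1 else 0)
            + (if M + 1 ∈ Rset f then 1 else 0)) := by
        rcases Nat.eq_zero_or_pos M with rfl | h
        · simp [dB_zero_at]
        · rw [hcast M h]
      rw [hd]
      push_cast
      ring
  have hC : (1 : ℤ) ≤ ∑ n ∈ Finset.range N, (if n ∈ Rset f then (1 : ℤ) else 0) := by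
    have := Finset.single_le_sum (f := fun n => (if n ∈ Rset f then (1 : ℤ) else 0))
      (fun i _ => by split_ifs <;> norm_num) (Finset.mem_range.mpr hqN)
    simpa [hq] using this
  have final : (∑ n ∈ Finset.range N, (n : ℤ) * dB f n)
      < ∑ n ∈ Finset.range N, (n : ℤ) * f n := by
    rw [main N, if_neg hrN]
    omega
  exact_mod_cast final

lemma exists_iterate_zero (h0 : f 0 = 0) (hfin : (Function.support f).Finite) :
    ∃ m, dB^[m] f = zeroF := by
  obtain ⟨N, hN⟩ := supp_bound hfin
  have key : ∀ s : ℕ, ∀ g : ℕ → ℕ, g 0 = 0 → (∀ m, N ≤ m → g m = 0) →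
      (∑ n ∈ Finset.range N, n * g n ≤ s) → ∃ m, dB^[m] g = zeroF := by
    intro s
    induction s with
    | zero =>
      intro g hg0 hgN hs
      refine ⟨0, ?_⟩
      simp only [Function.iterate_zero_apply]
      funext n
      rcases Nat.eq_zero_or_pos n with rfl | hn
      · exact hg0
      · rcases le_or_gt N n with h | h
        · exact hgN n h
        · have hz : ∑ n ∈ Finset.range N, n * g n = 0 := by omega
          have := (Finset.sum_eq_zero_iff).mp hz n (Finset.mem_range.mpr h)
          have : g n = 0 := by
            rcases Nat.mul_eq_zero.mp this with h' | h'
            · omega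
            · exact h'
          exact this
    | succ s ih =>
      intro g hg0 hgN hs
      by_cases hz : g = zeroF
      · exact ⟨0, hz⟩
      · have hlt := size_lt hg0 (fin_of_bound hgN) hgN hz
        obtain ⟨m, hm⟩ := ih (dB g) dB_zero_at (dB_bound hgN) (by omega)
        exact ⟨m + 1, by rw [Function.iterate_succ_apply]; exact hm⟩
  exact key _ f h0 hN (le_refl _)

lemma chainK_find (hex : ∃ m, dB^[m] f = zeroF) : chainK f = Nat.find hex := by
  rw [chainK, dif_pos hex]

lemma chainK_eq_zero_iff (h0 : f 0 = 0) (hfin : (Function.support f).Finite) :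
    chainK f = 0 ↔ f = zeroF := by
  have hex := exists_iterate_zero h0 hfin
  rw [chainK_find hex, Nat.find_eq_zero hex, Function.iterate_zero_apply]

lemma chainK_zeroF : chainK zeroF = 0 :=
  (chainK_eq_zero_iff rfl zeroF_fin).mpr rfl

lemma chainK_succ' (h0 : f 0 = 0) (hfin : (Function.support f).Finite) (hne : f ≠ zeroF) :
    chainK f = chainK (dB f) + 1 := by
  have hex := exists_iterate_zero h0 hfin
  have hex' : ∃ m, dB^[m] (dB f) = zeroF := by
    obtain ⟨m, hm⟩ := exists_iterate_zero dB_zero_at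
      (fin_of_bound (dB_bound (supp_bound hfin).choose_spec))
    exact ⟨m, hm⟩
  rw [chainK_find hex, chainK_find hex']
  have h1 : Nat.find hex ≠ 0 := by
    intro hc
    have := Nat.find_spec hex
    rw [hc, Function.iterate_zero_apply] at this
    exact hne this
  apply le_antisymm
  · apply Nat.find_le
    rw [Function.iterate_succ_apply]
    exact Nat.find_spec hex'
  · have h2 : dB^[Nat.find hex - 1] (dB f) = zeroF := by
      have h3 : dB^[Nat.find hex - 1 + 1] f = zeroF := by
        rw [show Nat.find hex - 1 + 1 = Nat.find hex by omega]
        exact Nat.find_spec hex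
      rw [Function.iterate_succ_apply] at h3
      exact h3
    have h4 : Nat.find hex' ≤ Nat.find hex - 1 := Nat.find_le h2
    omega

lemma burgeCode_length : (burgeCode f).length = chainK f + 1 := by
  simp [burgeCode]

lemma burgeCode_zeroF : burgeCode zeroF = [false] := by
  have h1 : (1 : ℕ) ∉ Rset zeroF := Rset_zeroF 1
  simp [burgeCode, chainK_zeroF, List.range_succ, h1]

lemma burgeCode_succ (h0 : f 0 = 0) (hfin : (Function.support f).Finite) (hne : f ≠ zeroF) :
    burgeCode f = (if 1 ∈ Rset f then true else false) :: burgeCode (dB f) := by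
  unfold burgeCode
  rw [chainK_succ' h0 hfin hne]
  rw [show chainK (dB f) + 1 + 1 = (chainK (dB f) + 1) + 1 from rfl,
    List.range_succ_eq_map, List.map_cons, List.map_map]
  simp only [Function.iterate_zero_apply]
  congr 1


lemma aB_zeroF : aB zeroF = zeroF := by
  funext n
  simp [aB, Lset_zeroF n, Lset_zeroF (n - 1), zeroF]

lemma IsFreq_dB (hf : IsFreq f) : IsFreq (dB f) :=
  ⟨dB_zero_at, fin_of_bound (dB_bound (supp_bound hf.2).choose_spec)⟩

lemma code_isW : ∀ k, ∀ f : ℕ → ℕ, IsFreq f → chainK f ≤ k → IsWword (burgeCode f) := by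
  intro k
  induction k with
  | zero =>
    intro f hf hk
    have hz : f = zeroF := (chainK_eq_zero_iff hf.1 hf.2).mp (by omega)
    rw [hz, burgeCode_zeroF]
    exact ⟨[], rfl, Or.inl rfl⟩
  | succ k ih =>
    intro f hf hk
    by_cases hz : f = zeroF
    · rw [hz, burgeCode_zeroF]
      exact ⟨[], rfl, Or.inl rfl⟩
    · have hstep := chainK_succ' hf.1 hf.2 hz
      have hdf : IsFreq (dB f) := IsFreq_dB hf
      obtain ⟨w', hw', hcase⟩ := ih (dB f) hdf (by omega)
      rw [burgeCode_succ hf.1 hf.2 hz]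
      rcases hcase with rfl | hlast
      · have hck : chainK (dB f) = 0 := by
          have hl := congrArg List.length hw'
          rw [burgeCode_length] at hl
          simp at hl
          omega
        have hdz : dB f = zeroF := (chainK_eq_zero_iff hdf.1 hdf.2).mp hck
        have h1R : 1 ∈ Rset f := by
          by_contra hc
          exact hz (by rw [← aB_dB hf.1 hf.2 hc, hdz, aB_zeroF])
        rw [if_pos h1R, hw']
        exact ⟨[true], rfl, Or.inr (by simp)⟩
      · refine ⟨(if 1 ∈ Rset f then true else false) :: w', by rw [hw']; simp, Or.inr ?_⟩
        cases w' with
        | nil => simp at hlast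
        | cons x xs => rw [List.getLast?_cons_cons]; exact hlast

lemma code_inj : ∀ k, ∀ f g : ℕ → ℕ, IsFreq f → IsFreq g → chainK f ≤ k →
    burgeCode f = burgeCode g → f = g := by
  intro k
  induction k with
  | zero =>
    intro f g hf hg hk heq
    have hzf : f = zeroF := (chainK_eq_zero_iff hf.1 hf.2).mp (by omega)
    have hlen := congrArg List.length heq
    rw [burgeCode_length, burgeCode_length] at hlen
    have hzg : g = zeroF := (chainK_eq_zero_iff hg.1 hg.2).mp (by omega)
    rw [hzf, hzg]
  | succ k ih =>
    intro f g hf hg hk heq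
    have hlen := congrArg List.length heq
    rw [burgeCode_length, burgeCode_length] at hlen
    by_cases hz : f = zeroF
    · have h0 : chainK f = 0 := (chainK_eq_zero_iff hf.1 hf.2).mpr hz
      have hzg : g = zeroF := (chainK_eq_zero_iff hg.1 hg.2).mp (by omega)
      rw [hz, hzg]
    · have hzg : g ≠ zeroF := by
        intro hc
        have h1 : chainK g = 0 := (chainK_eq_zero_iff hg.1 hg.2).mpr hc
        have h2 : chainK f = 0 := by omega
        exact hz ((chainK_eq_zero_iff hf.1 hf.2).mp h2)
      rw [burgeCode_succ hf.1 hf.2 hz, burgeCode_succ hg.1 hg.2 hzg,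
        List.cons.injEq] at heq
      obtain ⟨hhead, htail⟩ := heq
      have hdf : IsFreq (dB f) := IsFreq_dB hf
      have hdg : IsFreq (dB g) := IsFreq_dB hg
      have hstep := chainK_succ' hf.1 hf.2 hz
      have hde : dB f = dB g := ih (dB f) (dB g) hdf hdg (by omega) htail
      have hR : (1 ∈ Rset f) ↔ (1 ∈ Rset g) := by
        by_cases h1 : 1 ∈ Rset f <;> by_cases h2 : 1 ∈ Rset g <;>
          simp [h1, h2] at hhead ⊢
      by_cases h1 : 1 ∈ Rset f
      · rw [← bB_dB hf.1 hf.2 h1, ← bB_dB hg.1 hg.2 (hR.mp h1), hde]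
      · rw [← aB_dB hf.1 hf.2 h1, ← aB_dB hg.1 hg.2 (fun hc => h1 (hR.mpr hc)), hde]

lemma IsWword_length_pos {w : List Bool} (h : IsWword w) : 1 ≤ w.length := by
  obtain ⟨w', rfl, -⟩ := h
  simp

lemma code_surj : ∀ n, ∀ w : List Bool, IsWword w → w.length ≤ n →
    ∃ f : ℕ → ℕ, IsFreq f ∧ burgeCode f = w := by
  intro n
  induction n with
  | zero =>
    intro w hw hn
    exact absurd (IsWword_length_pos hw) (by omega)
  | succ n ih =>
    intro w hw hn
    obtain ⟨w', hw', hcase⟩ := hw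
    cases w' with
    | nil =>
      refine ⟨zeroF, ⟨rfl, zeroF_fin⟩, ?_⟩
      rw [hw']
      exact burgeCode_zeroF
    | cons c u =>
      rcases hcase with h | hlast
      · simp at h
      · have hv : IsWword (u ++ [false]) := by
          refine ⟨u, rfl, ?_⟩
          cases u with
          | nil => exact Or.inl rfl
          | cons x xs => exact Or.inr (by rwa [List.getLast?_cons_cons] at hlast)
        have hlen : (u ++ [false]).length ≤ n := by
          have := congrArg List.length hw'
          simp at this ⊢
          omega
        obtain ⟨g, hg, hcode⟩ := ih (u ++ [false]) hv hlen
        by_cases hc : c = true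
        · have hf : IsFreq (bB g) := ⟨bB_zero_at, bB_fin hg.2⟩
          have hne : bB g ≠ zeroF := by
            intro h
            have := congrFun h 1
            simp [bB, zeroF] at this
          refine ⟨bB g, hf, ?_⟩
          rw [burgeCode_succ hf.1 hf.2 hne, dB_bB hg.1 hg.2, hcode,
            if_pos (one_mem_R_bB hg.1 hg.2), hw', hc]
          rfl
        · have hc' : c = false := by cases c <;> simp_all
          have hu : u ≠ [] := by
            intro h
            subst h
            rw [hc'] at hlast
            simp at hlast
          have hgne : g ≠ zeroF := by
            intro h
            have hl := congrArg List.length hcode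
            rw [h, burgeCode_zeroF] at hl
            cases u with
            | nil => exact hu rfl
            | cons x xs => simp at hl
          have hf : IsFreq (aB g) :=
            ⟨aB_zero_at, fin_of_bound (aB_bound (supp_bound hg.2).choose_spec)⟩
          have hne : aB g ≠ zeroF := by
            intro h
            exact hgne (by rw [← dB_aB hg.1 hg.2, h, dB_zeroF])
          refine ⟨aB g, hf, ?_⟩
          rw [burgeCode_succ hf.1 hf.2 hne, dB_aB hg.1 hg.2, hcode,
            if_neg (one_notin_R_aB hg.1 hg.2), hw', hc']
          rfl

end BurgeLemmas

/-- the Burge encoding is a bijection between `F` and `W`. -/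
theorem stmt8 : Set.BijOn burgeCode {f : ℕ → ℕ | IsFreq f} {w : List Bool | IsWword w} := by
  refine ⟨?_, ?_, ?_⟩
  · intro f hf
    exact code_isW (chainK f) f hf (le_refl _)
  · intro f hf g hg heq
    exact code_inj (chainK f) f g hf hg (le_refl _) heq
  · intro w hw
    obtain ⟨f, hf, hcode⟩ := code_surj w.length w hw (le_refl _)
    exact ⟨f, hf, hcode⟩
end
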